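/- Let a < b be reals, let g : [a,b] → ℝ be continuous and strictly increasing, and let G : [g(a), g(b)] → ℝ be convex. Define F = G ∘ g on [a,b]. Suppose x₀ ∈ (a,b), F is differentiable at x₀ with F′(x₀) = 0, g is differentiable at x₀ with g′(x₀) > 0, and G is differentiable at g(x₀). Then F(x₀) ≤ F(x) for all x ∈ [a,b]; that is, x₀ is a global minimizer of F. -/
import Mathlib

/-- A stationary point of the nonconvex `F = G ∘ g` with `g' > 0` is a global minimizer
of `F` on `[a,b]`, thanks to the convex reformulation `G`. -/
theorem stmt_14 (a b : ℝ) (hab : a < b) (g G : ℝ → ℝ)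
    (hgc : ContinuousOn g (Set.Icc a b)) (hgm : StrictMonoOn g (Set.Icc a b))
    (hGconv : ConvexOn ℝ (Set.Icc (g a) (g b)) G)
    (x₀ : ℝ) (hx₀ : x₀ ∈ Set.Ioo a b)
    (hF : HasDerivAt (G ∘ g) 0 x₀)
    (gd : ℝ) (hg : HasDerivAt g gd x₀) (hgd : 0 < gd)
    (Gd : ℝ) (hG : HasDerivAt G Gd (g x₀)) :
    ∀ x ∈ Set.Icc a b, (G ∘ g) x₀ ≤ (G ∘ g) x := by
  have hchain : HasDerivAt (G ∘ g) (Gd * gd) x₀ := hG.comp x₀ hg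
  have hGd0 : Gd = 0 := by
    have := hchain.unique hF
    have := mul_eq_zero.mp this
    rcases this with h | h
    · exact h
    · exact absurd h (ne_of_gt hgd)
  have hx₀' : x₀ ∈ Set.Icc a b := Set.Ioo_subset_Icc_self hx₀
  have hmem : ∀ x ∈ Set.Icc a b, g x ∈ Set.Icc (g a) (g b) := fun x hx =>
    ⟨hgm.monotoneOn (Set.left_mem_Icc.mpr hab.le) hx hx.1,
     hgm.monotoneOn hx (Set.right_mem_Icc.mpr hab.le) hx.2⟩
  intro x hx
  rcases lt_trichotomy (g x) (g x₀) with h | h | h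
  · have := hGconv.slope_le_of_hasDerivAt (hmem x hx) (hmem x₀ hx₀') h hG
    rw [hGd0, slope_def_field, div_nonpos_iff] at this
    simp only [Function.comp_apply]
    rcases this with ⟨h1, h2⟩ | ⟨h1, h2⟩ <;> linarith [sub_pos.mpr h]
  · simp [Function.comp_apply, h]
  · have := hGconv.le_slope_of_hasDerivAt (hmem x₀ hx₀') (hmem x hx) h hG
    rw [hGd0, slope_def_field, div_nonneg_iff] at this
    simp only [Function.comp_apply]
    rcases this with ⟨h1, h2⟩ | ⟨h1, h2⟩ <;> linarith [sub_pos.mpr h]
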